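/- arXiv:2308.01410 — 2 statements merged into one kernel-verified Lean document; each statement's English description precedes it below -/
import Mathlib

section
/- Let V and W be finite-dimensional vector spaces over a field k, and let σ_W : W⊗W → W⊗W, φ : V⊗W → W⊗V, ψ : W⊗V → V⊗W be linear isomorphisms satisfying: (e) (σ_W⊗id)∘(id⊗φ)∘(φ⊗id) = (id⊗φ)∘(φ⊗id)∘(id⊗σ_W) on V⊗W⊗W, and (f) (φ⊗id)∘(id⊗σ_W)∘(ψ⊗id) = (id⊗ψ)∘(σ_W⊗id)∘(id⊗φ) on W⊗V⊗W. Then, setting τ := ψ∘φ : V⊗W → V⊗W, the identity (id⊗τ)∘(φ⊗id) = (φ⊗id)∘(id⊗σ_W)∘(τ⊗id)∘(id⊗σ_W^{-1}) holds on V⊗W⊗W. -/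
/-!
Writing `τ = ψ ∘ φ`, so that `id ⊗ τ = (id ⊗ ψ) ∘ (id ⊗ φ)` and `τ ⊗ id = (ψ ⊗ id) ∘ (φ ⊗ id)`,
the braid relation (e) moves `id ⊗ σ_W` across `(id ⊗ φ) ∘ (φ ⊗ id)`, and then (f) moves
`(id ⊗ ψ) ∘ (σ_W ⊗ id) ∘ (id ⊗ φ)` back, giving
`(id ⊗ τ) ∘ (φ ⊗ id) ∘ (id ⊗ σ_W) = (φ ⊗ id) ∘ (id ⊗ σ_W) ∘ (τ ⊗ id)`.
Composing on the right with `id ⊗ σ_W⁻¹` yields the identity.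
-/

open TensorProduct LinearMap

/-- Apply a linear map to the first two factors of a right-nested triple tensor product,
using the canonical associativity identifications. -/
noncomputable def fstMap (k : Type*) [Field k] {A B A' B' : Type*}
    [AddCommGroup A] [Module k A] [AddCommGroup B] [Module k B]
    [AddCommGroup A'] [Module k A'] [AddCommGroup B'] [Module k B']
    (C : Type*) [AddCommGroup C] [Module k C]
    (f : A ⊗[k] B →ₗ[k] A' ⊗[k] B') :
    A ⊗[k] (B ⊗[k] C) →ₗ[k] A' ⊗[k] (B' ⊗[k] C) :=
  (TensorProduct.assoc k A' B' C).toLinearMap ∘ₗ f.rTensor C ∘ₗ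
    (TensorProduct.assoc k A B C).symm.toLinearMap

theorem fstMap_comp {k : Type*} [Field k] {A B A' B' A'' B'' : Type*}
    [AddCommGroup A] [Module k A] [AddCommGroup B] [Module k B]
    [AddCommGroup A'] [Module k A'] [AddCommGroup B'] [Module k B']
    [AddCommGroup A''] [Module k A''] [AddCommGroup B''] [Module k B'']
    (C : Type*) [AddCommGroup C] [Module k C]
    (g : A' ⊗[k] B' →ₗ[k] A'' ⊗[k] B'') (f : A ⊗[k] B →ₗ[k] A' ⊗[k] B') :
    fstMap k C (g ∘ₗ f) = fstMap k C g ∘ₗ fstMap k C f := by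
  ext a b c
  simp [fstMap]

section

variable {k : Type*} [Field k] {V W : Type*}
  [AddCommGroup V] [Module k V] [AddCommGroup W] [Module k W]
  {σW : W ⊗[k] W →ₗ[k] W ⊗[k] W} {φ : V ⊗[k] W →ₗ[k] W ⊗[k] V} {ψ : W ⊗[k] V →ₗ[k] V ⊗[k] W}

theorem lTensor_comp_fstMap_comp_lTensor_eq
    (he : fstMap k V σW ∘ₗ lTensor W φ ∘ₗ fstMap k W φ =
      lTensor W φ ∘ₗ fstMap k W φ ∘ₗ lTensor V σW)
    (hf : fstMap k W φ ∘ₗ lTensor V σW ∘ₗ fstMap k W ψ =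
      lTensor W ψ ∘ₗ fstMap k V σW ∘ₗ lTensor W φ) :
    lTensor W (ψ ∘ₗ φ) ∘ₗ fstMap k W φ ∘ₗ lTensor V σW =
      fstMap k W φ ∘ₗ lTensor V σW ∘ₗ fstMap k W (ψ ∘ₗ φ) := by
  calc lTensor W (ψ ∘ₗ φ) ∘ₗ fstMap k W φ ∘ₗ lTensor V σW
      = lTensor W ψ ∘ₗ (lTensor W φ ∘ₗ fstMap k W φ ∘ₗ lTensor V σW) := by
        rw [lTensor_comp, comp_assoc]
    _ = (lTensor W ψ ∘ₗ fstMap k V σW ∘ₗ lTensor W φ) ∘ₗ fstMap k W φ := by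
        rw [← he]; simp only [comp_assoc]
    _ = fstMap k W φ ∘ₗ lTensor V σW ∘ₗ fstMap k W (ψ ∘ₗ φ) := by
        rw [← hf, fstMap_comp]; simp only [comp_assoc]

end

theorem tau_phi_identity_general (k : Type*) [Field k] (V W : Type*)
    [AddCommGroup V] [Module k V]
    [AddCommGroup W] [Module k W]
    (σW : W ⊗[k] W ≃ₗ[k] W ⊗[k] W)
    (φ : V ⊗[k] W ≃ₗ[k] W ⊗[k] V)
    (ψ : W ⊗[k] V ≃ₗ[k] V ⊗[k] W)
    -- (e) on V⊗W⊗W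
    (he : fstMap k V σW.toLinearMap ∘ₗ lTensor W φ.toLinearMap ∘ₗ fstMap k W φ.toLinearMap =
      lTensor W φ.toLinearMap ∘ₗ fstMap k W φ.toLinearMap ∘ₗ lTensor V σW.toLinearMap)
    -- (f) on W⊗V⊗W
    (hf : fstMap k W φ.toLinearMap ∘ₗ lTensor V σW.toLinearMap ∘ₗ fstMap k W ψ.toLinearMap =
      lTensor W ψ.toLinearMap ∘ₗ fstMap k V σW.toLinearMap ∘ₗ lTensor W φ.toLinearMap) :
    lTensor W (ψ.toLinearMap ∘ₗ φ.toLinearMap) ∘ₗ fstMap k W φ.toLinearMap =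
      fstMap k W φ.toLinearMap ∘ₗ lTensor V σW.toLinearMap ∘ₗ
        fstMap k W (ψ.toLinearMap ∘ₗ φ.toLinearMap) ∘ₗ
          lTensor V σW.symm.toLinearMap := by
  simp only [← comp_assoc]
  refine (LinearEquiv.eq_comp_toLinearMap_symm (e₁₂ := σW.lTensor V) _ _).2 ?_
  simpa only [comp_assoc, LinearEquiv.coe_lTensor] using lTensor_comp_fstMap_comp_lTensor_eq he hf

/-- Given linear isomorphisms `σ_W : W⊗W ≃ W⊗W`, `φ : V⊗W ≃ W⊗V`, `ψ : W⊗V ≃ V⊗W`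
satisfying the braid-type identities (e) and (f), the composite `τ := ψ∘φ` satisfies
`(id⊗τ)∘(φ⊗id) = (φ⊗id)∘(id⊗σ_W)∘(τ⊗id)∘(id⊗σ_W⁻¹)` on `V⊗W⊗W`. -/
theorem tau_phi_identity (k : Type*) [Field k] (V W : Type*)
    [AddCommGroup V] [Module k V] [FiniteDimensional k V]
    [AddCommGroup W] [Module k W] [FiniteDimensional k W]
    (σW : W ⊗[k] W ≃ₗ[k] W ⊗[k] W)
    (φ : V ⊗[k] W ≃ₗ[k] W ⊗[k] V)
    (ψ : W ⊗[k] V ≃ₗ[k] V ⊗[k] W)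
    -- (e) on V⊗W⊗W
    (he : fstMap k V σW.toLinearMap ∘ₗ lTensor W φ.toLinearMap ∘ₗ fstMap k W φ.toLinearMap =
      lTensor W φ.toLinearMap ∘ₗ fstMap k W φ.toLinearMap ∘ₗ lTensor V σW.toLinearMap)
    -- (f) on W⊗V⊗W
    (hf : fstMap k W φ.toLinearMap ∘ₗ lTensor V σW.toLinearMap ∘ₗ fstMap k W ψ.toLinearMap =
      lTensor W ψ.toLinearMap ∘ₗ fstMap k V σW.toLinearMap ∘ₗ lTensor W φ.toLinearMap) :
    lTensor W (ψ.toLinearMap ∘ₗ φ.toLinearMap) ∘ₗ fstMap k W φ.toLinearMap =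
      fstMap k W φ.toLinearMap ∘ₗ lTensor V σW.toLinearMap ∘ₗ
        fstMap k W (ψ.toLinearMap ∘ₗ φ.toLinearMap) ∘ₗ
          lTensor V σW.symm.toLinearMap :=
  tau_phi_identity_general k V W σW φ ψ he hf
end

section
/- Let V and W be finite-dimensional vector spaces over a field k, and let σ_V : V⊗V → V⊗V, σ_W : W⊗W → W⊗W, τ : V⊗W → V⊗W, φ : V⊗W → W⊗V be linear isomorphisms satisfying the separability identity (τ⊗id)∘(id⊗φ) = (id⊗φ)∘(σ_V⊗id)∘(id⊗τ)∘(σ_V^{-1}⊗id) on V⊗V⊗W, and the identity (id⊗τ)∘(φ⊗id) = (φ⊗id)∘(id⊗σ_W)∘(τ⊗id)∘(id⊗σ_W^{-1}) on V⊗W⊗W. Then the following identity holds on V⊗V⊗W⊗W: (σ_V⊗id⊗id)∘(id⊗τ⊗id)∘(σ_V^{-1}⊗id⊗id)∘(id⊗id⊗σ_W)∘(id⊗τ⊗id)∘(id⊗id⊗σ_W^{-1}) = (id⊗id⊗σ_W)∘(id⊗τ⊗id)∘(id⊗id⊗σ_W^{-1})∘(σ_V⊗id⊗id)∘(id⊗τ⊗id)∘(σ_V^{-1}⊗id⊗id).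 -/
/-!
Write `X = (σ_V⊗id)(id⊗τ)(σ_V⁻¹⊗id)` and `Y = (id⊗σ_W)(τ⊗id)(id⊗σ_W⁻¹)`; the claim
is that `X⊗id_W` and `id_V⊗Y` commute on `V⊗V⊗W⊗W`. With `P = id_V⊗φ⊗id_W`, the two hypotheses
say `P(X⊗id) = (τ⊗id⊗id)P` and `P(id⊗Y) = (id⊗id⊗τ)P`. The right-hand operators act on
disjoint factors of `V⊗W⊗V⊗W`, so they commute, and `P` is injective since vector spaces
are flat.
-/

open TensorProduct LinearMap

theorem LinearMap.commute_of_comp_eq_comp {R M N : Type*} [CommSemiring R]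
    [AddCommMonoid M] [Module R M] [AddCommMonoid N] [Module R N]
    {P : M →ₗ[R] N} (hP : Function.Injective P) {a b : Module.End R M}
    {a' b' : Module.End R N} (ha : P ∘ₗ a = a' ∘ₗ P) (hb : P ∘ₗ b = b' ∘ₗ P)
    (h : Commute a' b') : Commute a b := by
  refine (LinearMap.cancel_left hP).mp ?_
  calc P ∘ₗ (a ∘ₗ b) = a' ∘ₗ b' ∘ₗ P := by rw [← comp_assoc, ha, comp_assoc, hb]
    _ = b' ∘ₗ a' ∘ₗ P := by
      rw [← comp_assoc, ← comp_assoc]; exact congrArg (· ∘ₗ P) h.eq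
    _ = P ∘ₗ (b ∘ₗ a) := by rw [← ha, ← comp_assoc, ← hb, comp_assoc]

section FstMap

variable {k : Type*} [Field k]
variable {A B C D A' B' C' A'' B'' C'' : Type*}
variable [AddCommGroup A] [Module k A] [AddCommGroup B] [Module k B]
  [AddCommGroup C] [Module k C] [AddCommGroup D] [Module k D]
  [AddCommGroup A'] [Module k A'] [AddCommGroup B'] [Module k B']
  [AddCommGroup C'] [Module k C']
  [AddCommGroup A''] [Module k A''] [AddCommGroup B''] [Module k B'']
  [AddCommGroup C''] [Module k C'']

theorem fstMap_injective {f : A ⊗[k] B →ₗ[k] A' ⊗[k] B'} (hf : Function.Injective f) :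
    Function.Injective (fstMap k C f) :=
  (TensorProduct.assoc k A' B' C).injective.comp <|
    (Module.Flat.rTensor_preserves_injective_linearMap f hf).comp
      (TensorProduct.assoc k A B C).symm.injective

theorem fstMap_comp_lTensor_lTensor (f : A ⊗[k] B →ₗ[k] A' ⊗[k] B') (g : C →ₗ[k] C') :
    fstMap k C' f ∘ₗ lTensor A (lTensor B g) = lTensor A' (lTensor B' g) ∘ₗ fstMap k C f := by
  ext a b c
  simp only [fstMap, coe_comp, Function.comp_apply, LinearEquiv.coe_coe,
    AlgebraTensorModule.curry_apply, curry_apply, restrictScalars_apply,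
    lTensor_tmul, assoc_symm_tmul, rTensor_tmul]
  induction f (a ⊗ₜ[k] b) using TensorProduct.induction_on with
  | zero => simp
  | tmul x y => simp
  | add x y hx hy => simp [add_tmul, hx, hy]

variable (D) in
noncomputable def fstThreeMap (g : A ⊗[k] (B ⊗[k] C) →ₗ[k] A' ⊗[k] (B' ⊗[k] C')) :
    A ⊗[k] (B ⊗[k] (C ⊗[k] D)) →ₗ[k] A' ⊗[k] (B' ⊗[k] (C' ⊗[k] D)) :=
  ((TensorProduct.assoc k A' (B' ⊗[k] C') D) ≪≫ₗ
      TensorProduct.congr (LinearEquiv.refl k A') (TensorProduct.assoc k B' C' D)).toLinearMap ∘ₗ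
    g.rTensor D ∘ₗ
    ((TensorProduct.assoc k A (B ⊗[k] C) D) ≪≫ₗ
      TensorProduct.congr (LinearEquiv.refl k A) (TensorProduct.assoc k B C D)).symm.toLinearMap

theorem fstThreeMap_comp (g : A' ⊗[k] (B' ⊗[k] C') →ₗ[k] A'' ⊗[k] (B'' ⊗[k] C''))
    (h : A ⊗[k] (B ⊗[k] C) →ₗ[k] A' ⊗[k] (B' ⊗[k] C')) :
    fstThreeMap D (g ∘ₗ h) = fstThreeMap D g ∘ₗ fstThreeMap D h := by
  ext x
  simp [fstThreeMap, rTensor_comp]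

theorem fstThreeMap_fstMap (f : A ⊗[k] B →ₗ[k] A' ⊗[k] B') :
    fstThreeMap D (fstMap k C f) = fstMap k (C ⊗[k] D) f := by
  ext a b c d
  simp only [fstThreeMap, fstMap, coe_comp, Function.comp_apply, LinearEquiv.coe_coe,
    AlgebraTensorModule.curry_apply, curry_apply, restrictScalars_apply,
    LinearEquiv.trans_apply, LinearEquiv.trans_symm, LinearEquiv.refl_apply, assoc_symm_tmul,
    rTensor_tmul, TensorProduct.congr_symm_tmul, LinearEquiv.refl_symm]
  induction f (a ⊗ₜ[k] b) using TensorProduct.induction_on with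
  | zero => simp
  | tmul x y => simp
  | add x y hx hy => simp [add_tmul, hx, hy]

theorem fstThreeMap_lTensor (g : B ⊗[k] C →ₗ[k] B' ⊗[k] C') :
    fstThreeMap D (lTensor A g) = lTensor A (fstMap k D g) := by
  ext a b c d
  simp only [fstThreeMap, fstMap, coe_comp, Function.comp_apply, LinearEquiv.coe_coe,
    AlgebraTensorModule.curry_apply, curry_apply, restrictScalars_apply,
    LinearEquiv.trans_apply, LinearEquiv.trans_symm, TensorProduct.congr_tmul,
    LinearEquiv.refl_apply, assoc_symm_tmul, assoc_tmul, rTensor_tmul, lTensor_tmul,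
    TensorProduct.congr_symm_tmul, LinearEquiv.refl_symm]

end FstMap

theorem mixed_braid_identity_three_general (k : Type*) [Field k] (V W : Type*)
    [AddCommGroup V] [Module k V]
    [AddCommGroup W] [Module k W]
    (σV : V ⊗[k] V ≃ₗ[k] V ⊗[k] V)
    (σW : W ⊗[k] W ≃ₗ[k] W ⊗[k] W)
    (τ : V ⊗[k] W ≃ₗ[k] V ⊗[k] W)
    (φ : V ⊗[k] W ≃ₗ[k] W ⊗[k] V)
    -- separability: (τ⊗id)∘(id⊗φ) = (id⊗φ)∘(σ_V⊗id)∘(id⊗τ)∘(σ_V⁻¹⊗id) on V⊗V⊗W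
    (hsep : fstMap k V τ.toLinearMap ∘ₗ lTensor V φ.toLinearMap =
      lTensor V φ.toLinearMap ∘ₗ fstMap k W σV.toLinearMap ∘ₗ
        lTensor V τ.toLinearMap ∘ₗ fstMap k W σV.symm.toLinearMap)
    -- (id⊗τ)∘(φ⊗id) = (φ⊗id)∘(id⊗σ_W)∘(τ⊗id)∘(id⊗σ_W⁻¹) on V⊗W⊗W
    (hphi : lTensor W τ.toLinearMap ∘ₗ fstMap k W φ.toLinearMap =
      fstMap k W φ.toLinearMap ∘ₗ lTensor V σW.toLinearMap ∘ₗ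
        fstMap k W τ.toLinearMap ∘ₗ lTensor V σW.symm.toLinearMap) :
    fstMap k (W ⊗[k] W) σV.toLinearMap ∘ₗ lTensor V (fstMap k W τ.toLinearMap) ∘ₗ
        fstMap k (W ⊗[k] W) σV.symm.toLinearMap ∘ₗ lTensor V (lTensor V σW.toLinearMap) ∘ₗ
          lTensor V (fstMap k W τ.toLinearMap) ∘ₗ lTensor V (lTensor V σW.symm.toLinearMap) =
      lTensor V (lTensor V σW.toLinearMap) ∘ₗ lTensor V (fstMap k W τ.toLinearMap) ∘ₗ
        lTensor V (lTensor V σW.symm.toLinearMap) ∘ₗ fstMap k (W ⊗[k] W) σV.toLinearMap ∘ₗ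
          lTensor V (fstMap k W τ.toLinearMap) ∘ₗ fstMap k (W ⊗[k] W) σV.symm.toLinearMap := by
  have hP : Function.Injective (lTensor V (fstMap k W φ.toLinearMap)) :=
    Module.Flat.lTensor_preserves_injective_linearMap _ (fstMap_injective φ.injective)
  have hX := congrArg (fstThreeMap W) hsep
  simp only [fstThreeMap_comp, fstThreeMap_fstMap, fstThreeMap_lTensor] at hX
  have hY := congrArg (lTensor V) hphi
  simp only [lTensor_comp] at hY
  have h := commute_of_comp_eq_comp hP hX.symm hY.symm
    (fstMap_comp_lTensor_lTensor τ.toLinearMap τ.toLinearMap)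
  simpa only [Module.End.mul_eq_comp, comp_assoc] using h.eq

/-- Given linear isomorphisms `σ_V`, `σ_W`, `τ : V⊗W ≃ V⊗W`, `φ : V⊗W ≃ W⊗V` satisfying
the separability identity on `V⊗V⊗W` and the identity
`(id⊗τ)∘(φ⊗id) = (φ⊗id)∘(id⊗σ_W)∘(τ⊗id)∘(id⊗σ_W⁻¹)` on `V⊗W⊗W`, the mixed braid
identity (3) holds on `V⊗V⊗W⊗W`. -/
theorem mixed_braid_identity_three (k : Type*) [Field k] (V W : Type*)
    [AddCommGroup V] [Module k V] [FiniteDimensional k V]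
    [AddCommGroup W] [Module k W] [FiniteDimensional k W]
    (σV : V ⊗[k] V ≃ₗ[k] V ⊗[k] V)
    (σW : W ⊗[k] W ≃ₗ[k] W ⊗[k] W)
    (τ : V ⊗[k] W ≃ₗ[k] V ⊗[k] W)
    (φ : V ⊗[k] W ≃ₗ[k] W ⊗[k] V)
    -- separability: (τ⊗id)∘(id⊗φ) = (id⊗φ)∘(σ_V⊗id)∘(id⊗τ)∘(σ_V⁻¹⊗id) on V⊗V⊗W
    (hsep : fstMap k V τ.toLinearMap ∘ₗ lTensor V φ.toLinearMap =
      lTensor V φ.toLinearMap ∘ₗ fstMap k W σV.toLinearMap ∘ₗ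
        lTensor V τ.toLinearMap ∘ₗ fstMap k W σV.symm.toLinearMap)
    -- (id⊗τ)∘(φ⊗id) = (φ⊗id)∘(id⊗σ_W)∘(τ⊗id)∘(id⊗σ_W⁻¹) on V⊗W⊗W
    (hphi : lTensor W τ.toLinearMap ∘ₗ fstMap k W φ.toLinearMap =
      fstMap k W φ.toLinearMap ∘ₗ lTensor V σW.toLinearMap ∘ₗ
        fstMap k W τ.toLinearMap ∘ₗ lTensor V σW.symm.toLinearMap) :
    fstMap k (W ⊗[k] W) σV.toLinearMap ∘ₗ lTensor V (fstMap k W τ.toLinearMap) ∘ₗ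
        fstMap k (W ⊗[k] W) σV.symm.toLinearMap ∘ₗ lTensor V (lTensor V σW.toLinearMap) ∘ₗ
          lTensor V (fstMap k W τ.toLinearMap) ∘ₗ lTensor V (lTensor V σW.symm.toLinearMap) =
      lTensor V (lTensor V σW.toLinearMap) ∘ₗ lTensor V (fstMap k W τ.toLinearMap) ∘ₗ
        lTensor V (lTensor V σW.symm.toLinearMap) ∘ₗ fstMap k (W ⊗[k] W) σV.toLinearMap ∘ₗ
          lTensor V (fstMap k W τ.toLinearMap) ∘ₗ fstMap k (W ⊗[k] W) σV.symm.toLinearMap :=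
  mixed_braid_identity_three_general k V W σV σW τ φ hsep hphi
end
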